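/- arXiv:1512.08588 — 5 statements merged into one kernel-verified Lean document; each statement's English description precedes it below -/
import Mathlib

section
/- Let $M$ be a left-left Yetter-Drinfeld module over the tensor product bialgebra $H\otimes H^*$, with induced structures as above. Then the right-left Long compatibility holds: $(m\cdot h)_{(-1)}\otimes (m\cdot h)_{(0)} = m_{(-1)}\otimes m_{(0)}\cdot h$ for all $h\in H$, $m\in M$. -/
/- Common setup: Yetter-Drinfeld-Long bimodules over a bialgebra `H`, and
Yetter-Drinfeld modules over the tensor product bialgebra `H ⊗ H^*`. -/

open TensorProduct LinearMap Module

noncomputable section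

namespace YDL

variable (k : Type) [Field k] (H : Type) [Ring H] [Bialgebra k H]
variable (M : Type) [AddCommGroup M] [Module k M]

/-- Data of an `H`-bimodule, `H`-bicomodule structure on `M`:
left action `aL`, right action `aR`, left coaction `cL`, right coaction `cR`. -/
structure LRData where
  aL : H ⊗[k] M →ₗ[k] M
  aR : M ⊗[k] H →ₗ[k] M
  cL : M →ₗ[k] H ⊗[k] M
  cR : M →ₗ[k] M ⊗[k] H

variable {k H M}

/-- `M` is a left `H`-module. -/
structure IsLMod (D : LRData k H M) : Prop where
  one_act : ∀ m : M, D.aL (1 ⊗ₜ m) = m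
  mul_act : ∀ (g h : H) (m : M), D.aL ((g * h) ⊗ₜ m) = D.aL (g ⊗ₜ D.aL (h ⊗ₜ m))

/-- `M` is a right `H`-module. -/
structure IsRMod (D : LRData k H M) : Prop where
  act_one : ∀ m : M, D.aR (m ⊗ₜ 1) = m
  act_mul : ∀ (m : M) (g h : H), D.aR (m ⊗ₜ (g * h)) = D.aR (D.aR (m ⊗ₜ g) ⊗ₜ h)

/-- `M` is a left `H`-comodule. -/
structure IsLCom (D : LRData k H M) : Prop where
  coassoc : (TensorProduct.assoc k H H M).toLinearMap ∘ₗ map Coalgebra.comul LinearMap.id ∘ₗ D.cL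
      = map LinearMap.id D.cL ∘ₗ D.cL
  counit : (TensorProduct.lid k M).toLinearMap ∘ₗ map Coalgebra.counit LinearMap.id ∘ₗ D.cL
      = LinearMap.id

/-- `M` is a right `H`-comodule. -/
structure IsRCom (D : LRData k H M) : Prop where
  coassoc : (TensorProduct.assoc k M H H).toLinearMap ∘ₗ map D.cR LinearMap.id ∘ₗ D.cR
      = map LinearMap.id Coalgebra.comul ∘ₗ D.cR
  counit : (TensorProduct.rid k M).toLinearMap ∘ₗ map LinearMap.id Coalgebra.counit ∘ₗ D.cR
      = LinearMap.id

/-- Left-left Yetter-Drinfeld condition (1.1):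
`(h₁·m)₍₋₁₎h₂ ⊗ (h₁·m)₍₀₎ = h₁m₍₋₁₎ ⊗ h₂·m₍₀₎`, as maps `H ⊗ M → H ⊗ M`. -/
def Cond1 (D : LRData k H M) : Prop :=
  map (LinearMap.mul' k H ∘ₗ (TensorProduct.comm k H H).toLinearMap) LinearMap.id ∘ₗ
    (TensorProduct.assoc k H H M).symm.toLinearMap ∘ₗ
    map LinearMap.id (D.cL ∘ₗ D.aL) ∘ₗ
    (TensorProduct.assoc k H H M).toLinearMap ∘ₗ
    map ((TensorProduct.comm k H H).toLinearMap ∘ₗ Coalgebra.comul) LinearMap.id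
  = map (LinearMap.mul' k H) D.aL ∘ₗ
    (tensorTensorTensorComm k H H H M).toLinearMap ∘ₗ map Coalgebra.comul D.cL

/-- Left-right Long condition (1.2): `(h·m)₍₀₎ ⊗ (h·m)₍₁₎ = h·m₍₀₎ ⊗ m₍₁₎`. -/
def Cond2 (D : LRData k H M) : Prop :=
  D.cR ∘ₗ D.aL
  = map D.aL LinearMap.id ∘ₗ (TensorProduct.assoc k H M H).symm.toLinearMap ∘ₗ
      map LinearMap.id D.cR

/-- Right-right Yetter-Drinfeld condition (1.3):
`(m·h₂)₍₀₎ ⊗ h₁(m·h₂)₍₁₎ = m₍₀₎·h₁ ⊗ m₍₁₎h₂`, as maps `M ⊗ H → M ⊗ H`. -/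
def Cond3 (D : LRData k H M) : Prop :=
  map LinearMap.id (LinearMap.mul' k H ∘ₗ (TensorProduct.comm k H H).toLinearMap) ∘ₗ
    (TensorProduct.assoc k M H H).toLinearMap ∘ₗ
    map (D.cR ∘ₗ D.aR) LinearMap.id ∘ₗ
    (TensorProduct.assoc k M H H).symm.toLinearMap ∘ₗ
    map LinearMap.id ((TensorProduct.comm k H H).toLinearMap ∘ₗ Coalgebra.comul)
  = map D.aR (LinearMap.mul' k H) ∘ₗ
    (tensorTensorTensorComm k M H H H).toLinearMap ∘ₗ map D.cR Coalgebra.comul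

/-- Right-left Long condition (1.4): `(m·h)₍₋₁₎ ⊗ (m·h)₍₀₎ = m₍₋₁₎ ⊗ m₍₀₎·h`. -/
def Cond4 (D : LRData k H M) : Prop :=
  D.cL ∘ₗ D.aR
  = map LinearMap.id D.aR ∘ₗ (TensorProduct.assoc k H M H).toLinearMap ∘ₗ
      map D.cL LinearMap.id

/-- `M` with the data `D` is a Yetter-Drinfeld-Long bimodule: it is an `H`-bimodule
and an `H`-bicomodule satisfying the four compatibility conditions. -/
structure IsLR (D : LRData k H M) : Prop where
  lmod : IsLMod D
  rmod : IsRMod D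
  lcom : IsLCom D
  rcom : IsRCom D
  bimod : ∀ (h h' : H) (m : M), D.aL (h ⊗ₜ D.aR (m ⊗ₜ h')) = D.aR (D.aL (h ⊗ₜ m) ⊗ₜ h')
  bicom : (TensorProduct.assoc k H M H).toLinearMap ∘ₗ map D.cL LinearMap.id ∘ₗ D.cR
      = map LinearMap.id D.cR ∘ₗ D.cL
  cond1 : Cond1 D
  cond2 : Cond2 D
  cond3 : Cond3 D
  cond4 : Cond4 D

variable (k H M)

/-- The tensor product bialgebra `H ⊗ H^*` (as a vector space). -/
abbrev X := H ⊗[k] Module.Dual k H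

/-- Convolution product on `H^*`: `⟨f*g, h⟩ = ⟨f,h₁⟩⟨g,h₂⟩`. -/
def convL : Module.Dual k H ⊗[k] Module.Dual k H →ₗ[k] Module.Dual k H :=
  (Coalgebra.comul (R := k) (A := H)).dualMap ∘ₗ TensorProduct.dualDistrib k H H

/-- Counit of `H^*`: evaluation at `1`. -/
def εD : Module.Dual k H →ₗ[k] k := LinearMap.applyₗ (1 : H)

/-- Multiplication of the tensor product bialgebra `H ⊗ H^*`. -/
def μX : X k H ⊗[k] X k H →ₗ[k] X k H :=
  map (LinearMap.mul' k H) (convL k H) ∘ₗ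
    (tensorTensorTensorComm k H (Module.Dual k H) H (Module.Dual k H)).toLinearMap

/-- Unit of `H ⊗ H^*`. -/
def oneX : X k H := 1 ⊗ₜ (Coalgebra.counit : Module.Dual k H)

/-- Counit of `H ⊗ H^*`. -/
def εX : X k H →ₗ[k] k := LinearMap.mul' k k ∘ₗ map Coalgebra.counit (εD k H)

variable [FiniteDimensional k H]

/-- Comultiplication of `H^*` (for finite dimensional `H`): dual of multiplication. -/
def ΔD : Module.Dual k H →ₗ[k] Module.Dual k H ⊗[k] Module.Dual k H :=
  (TensorProduct.dualDistribEquiv k H H).symm.toLinearMap ∘ₗ (LinearMap.mul' k H).dualMap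

/-- Comultiplication of the tensor product bialgebra `H ⊗ H^*`. -/
def ΔX : X k H →ₗ[k] X k H ⊗[k] X k H :=
  (tensorTensorTensorComm k H H (Module.Dual k H) (Module.Dual k H)).toLinearMap ∘ₗ
    map Coalgebra.comul (ΔD k H)

/-- The canonical element `∑ hᵢ ⊗ hⁱ ∈ H ⊗ H^*` (dual bases). -/
def canel : H ⊗[k] Module.Dual k H := coevaluation k H 1

end YDL

end
namespace YDL

noncomputable section
open TensorProduct LinearMap Module

variable (k : Type) [Field k] (H : Type) [Ring H] [Bialgebra k H]
variable (M N P : Type) [AddCommGroup M] [Module k M] [AddCommGroup N] [Module k N]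
  [AddCommGroup P] [Module k P]

/-- Data of a module-comodule structure on `M` over `H ⊗ H^*`. -/
structure YDData where
  act : X k H ⊗[k] M →ₗ[k] M
  coact : M →ₗ[k] X k H ⊗[k] M

variable {k H M N P}

/-- `M` is a left `H ⊗ H^*`-module (stated on pure tensors, which span `H ⊗ H^*`). -/
structure IsXMod (E : YDData k H M) : Prop where
  one_act : ∀ m : M, E.act (oneX k H ⊗ₜ m) = m
  mul_act : ∀ (h h' : H) (f f' : Module.Dual k H) (m : M),
    E.act (((h * h') ⊗ₜ convL k H (f ⊗ₜ f')) ⊗ₜ m)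
      = E.act ((h ⊗ₜ f) ⊗ₜ E.act ((h' ⊗ₜ f') ⊗ₜ m))

variable [FiniteDimensional k H]

/-- `M` is a left `H ⊗ H^*`-comodule. -/
structure IsXCom (E : YDData k H M) : Prop where
  coassoc : (TensorProduct.assoc k (X k H) (X k H) M).toLinearMap ∘ₗ
      map (ΔX k H) LinearMap.id ∘ₗ E.coact = map LinearMap.id E.coact ∘ₗ E.coact
  counit : (TensorProduct.lid k M).toLinearMap ∘ₗ map (εX k H) LinearMap.id ∘ₗ E.coact
      = LinearMap.id

/-- The left-left Yetter-Drinfeld compatibility over `H ⊗ H^*`: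
`(x₁·m)₍₋₁₎x₂ ⊗ (x₁·m)₍₀₎ = x₁m₍₋₁₎ ⊗ x₂·m₍₀₎`, as maps `(H ⊗ H^*) ⊗ M → (H ⊗ H^*) ⊗ M`. -/
def CondYD (E : YDData k H M) : Prop :=
  map (μX k H ∘ₗ (TensorProduct.comm k (X k H) (X k H)).toLinearMap) LinearMap.id ∘ₗ
    (TensorProduct.assoc k (X k H) (X k H) M).symm.toLinearMap ∘ₗ
    map LinearMap.id (E.coact ∘ₗ E.act) ∘ₗ
    (TensorProduct.assoc k (X k H) (X k H) M).toLinearMap ∘ₗ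
    map ((TensorProduct.comm k (X k H) (X k H)).toLinearMap ∘ₗ ΔX k H) LinearMap.id
  = map (μX k H) E.act ∘ₗ
    (tensorTensorTensorComm k (X k H) (X k H) (X k H) M).toLinearMap ∘ₗ map (ΔX k H) E.coact

/-- `M` is a left-left Yetter-Drinfeld module over `H ⊗ H^*`. -/
structure IsYD (E : YDData k H M) : Prop where
  xmod : IsXMod E
  xcom : IsXCom E
  yd : CondYD E

/-! ### The functor `F : 𝓛𝓡(H) → ᴴ⊗ᴴ*YD` -/

/-- `f ⊗ m ↦ ⟨f, m₍₁₎⟩ m₍₀₎`, built from a right coaction `cR`. -/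
def evR (cR : M →ₗ[k] M ⊗[k] H) : Module.Dual k H ⊗[k] M →ₗ[k] M :=
  (TensorProduct.lid k M).toLinearMap ∘ₗ map (contractLeft k H) LinearMap.id ∘ₗ
    (TensorProduct.assoc k (Module.Dual k H) H M).symm.toLinearMap ∘ₗ
    map LinearMap.id ((TensorProduct.comm k M H).toLinearMap ∘ₗ cR)

/-- The `H ⊗ H^*`-action `(h ⊗ f) · m = ⟨f, m₍₁₎⟩ h · m₍₀₎` (formula (2.1)). -/
def Fact (D : LRData k H M) : X k H ⊗[k] M →ₗ[k] M :=
  D.aL ∘ₗ map LinearMap.id (evR D.cR) ∘ₗ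
    (TensorProduct.assoc k H (Module.Dual k H) M).toLinearMap

/-- `m ↦ ∑ hⁱ ⊗ m · hᵢ`, built from a right action `aR`. -/
def insD (aR : M ⊗[k] H →ₗ[k] M) : M →ₗ[k] Module.Dual k H ⊗[k] M :=
  map LinearMap.id (aR ∘ₗ (TensorProduct.comm k H M).toLinearMap) ∘ₗ
    (TensorProduct.assoc k (Module.Dual k H) H M).toLinearMap ∘ₗ
    TensorProduct.mk k (Module.Dual k H ⊗[k] H) M
      ((TensorProduct.comm k H (Module.Dual k H)) (canel k H))

/-- The `H ⊗ H^*`-coaction `ρ(m) = ∑ m₍₋₁₎ ⊗ hⁱ ⊗ m₍₀₎ · hᵢ` (formula (2.2)). -/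
def Fco (D : LRData k H M) : M →ₗ[k] X k H ⊗[k] M :=
  (TensorProduct.assoc k H (Module.Dual k H) M).symm.toLinearMap ∘ₗ
    map LinearMap.id (insD D.aR) ∘ₗ D.cL

/-- The functor `F` on objects. -/
def Fdata (D : LRData k H M) : YDData k H M := ⟨Fact D, Fco D⟩

/-! ### The functor `G : ᴴ⊗ᴴ*YD → 𝓛𝓡(H)` -/

variable (k H)

/-- `h ↦ h ⊗ ε`. -/
def ιH : H →ₗ[k] X k H :=
  (TensorProduct.mk k H (Module.Dual k H)).flip (Coalgebra.counit : Module.Dual k H)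

/-- `f ↦ 1 ⊗ f`. -/
def ιD : Module.Dual k H →ₗ[k] X k H := TensorProduct.mk k H (Module.Dual k H) 1

/-- `h ⊗ f ↦ ε*(f) h`. -/
def πH : X k H →ₗ[k] H := (TensorProduct.rid k H).toLinearMap ∘ₗ map LinearMap.id (εD k H)

/-- `(h ⊗ f) ⊗ h' ↦ ε(h)⟨f, h'⟩`. -/
def ξX : X k H ⊗[k] H →ₗ[k] k :=
  LinearMap.mul' k k ∘ₗ map Coalgebra.counit (contractLeft k H) ∘ₗ
    (TensorProduct.assoc k H (Module.Dual k H) H).toLinearMap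

variable {k H}

/-- The restricted left `H`-action `h · m = (h ⊗ ε) · m`. -/
def gL (A : X k H ⊗[k] M →ₗ[k] M) : H ⊗[k] M →ₗ[k] M := A ∘ₗ map (ιH k H) LinearMap.id

/-- The right `H`-action `m · h = ⟨(ε ⊗ id) m₍₋₁₎, h⟩ m₍₀₎`. -/
def gR (C : M →ₗ[k] X k H ⊗[k] M) : M ⊗[k] H →ₗ[k] M :=
  (TensorProduct.lid k M).toLinearMap ∘ₗ map (ξX k H) LinearMap.id ∘ₗ
    (TensorProduct.assoc k (X k H) H M).symm.toLinearMap ∘ₗ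
    map LinearMap.id (TensorProduct.comm k M H).toLinearMap ∘ₗ
    (TensorProduct.assoc k (X k H) M H).toLinearMap ∘ₗ map C LinearMap.id

/-- The left `H`-coaction `ρ_L(m) = (id ⊗ ε*)(m₍₋₁₎) ⊗ m₍₀₎`. -/
def gcL (C : M →ₗ[k] X k H ⊗[k] M) : M →ₗ[k] H ⊗[k] M := map (πH k H) LinearMap.id ∘ₗ C

/-- The right `H`-coaction `ρ_R(m) = ∑ (1 ⊗ hⁱ) · m ⊗ hᵢ`. -/
def gcR (A : X k H ⊗[k] M →ₗ[k] M) : M →ₗ[k] M ⊗[k] H :=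
  map (A ∘ₗ map (ιD k H) LinearMap.id) LinearMap.id ∘ₗ
    (TensorProduct.assoc k (Module.Dual k H) M H).symm.toLinearMap ∘ₗ
    map LinearMap.id (TensorProduct.comm k H M).toLinearMap ∘ₗ
    (TensorProduct.assoc k (Module.Dual k H) H M).toLinearMap ∘ₗ
    map (TensorProduct.comm k H (Module.Dual k H)).toLinearMap LinearMap.id ∘ₗ
    TensorProduct.mk k (H ⊗[k] Module.Dual k H) M (canel k H)

/-- The functor `G` on objects. -/
def Gdata (E : YDData k H M) : LRData k H M :=
  ⟨gL E.act, gR E.coact, gcL E.coact, gcR E.act⟩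

end

end YDL
namespace YDL

noncomputable section
open TensorProduct LinearMap Module

variable {k : Type} [Field k] {H : Type} [Ring H] [Bialgebra k H]
variable {M N P : Type} [AddCommGroup M] [Module k M] [AddCommGroup N] [Module k N]
  [AddCommGroup P] [Module k P]

/-- The tensor product of two Yetter-Drinfeld-Long bimodule structures, with diagonal
actions and codiagonal coactions. -/
def tensorLR (D : LRData k H M) (D' : LRData k H N) : LRData k H (M ⊗[k] N) where
  aL := map D.aL D'.aL ∘ₗ (tensorTensorTensorComm k H H M N).toLinearMap ∘ₗ
    map Coalgebra.comul LinearMap.id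
  aR := map D.aR D'.aR ∘ₗ (tensorTensorTensorComm k M N H H).toLinearMap ∘ₗ
    map LinearMap.id Coalgebra.comul
  cL := map (LinearMap.mul' k H) LinearMap.id ∘ₗ
    (tensorTensorTensorComm k H M H N).toLinearMap ∘ₗ map D.cL D'.cL
  cR := map LinearMap.id (LinearMap.mul' k H) ∘ₗ
    (tensorTensorTensorComm k M H N H).toLinearMap ∘ₗ map D.cR D'.cR

variable [FiniteDimensional k H]

/-- The tensor product of two Yetter-Drinfeld module structures over `H ⊗ H^*`. -/
def tensorYD (E : YDData k H M) (E' : YDData k H N) : YDData k H (M ⊗[k] N) where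
  act := map E.act E'.act ∘ₗ (tensorTensorTensorComm k (X k H) (X k H) M N).toLinearMap ∘ₗ
    map (ΔX k H) LinearMap.id
  coact := map (μX k H) LinearMap.id ∘ₗ
    (tensorTensorTensorComm k (X k H) M (X k H) N).toLinearMap ∘ₗ map E.coact E'.coact

/-- A linear map `φ : M → N` is a morphism of Yetter-Drinfeld-Long bimodules
(`H`-bilinear and `H`-bicolinear). -/
def LRHom (D : LRData k H M) (D' : LRData k H N) (φ : M →ₗ[k] N) : Prop :=
  φ ∘ₗ D.aL = D'.aL ∘ₗ map LinearMap.id φ ∧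
  φ ∘ₗ D.aR = D'.aR ∘ₗ map φ LinearMap.id ∧
  D'.cL ∘ₗ φ = map LinearMap.id φ ∘ₗ D.cL ∧
  D'.cR ∘ₗ φ = map φ LinearMap.id ∘ₗ D.cR

/-- A linear map `φ : M → N` is a morphism of Yetter-Drinfeld modules over `H ⊗ H^*`
(`H ⊗ H^*`-linear and colinear). -/
def YDHom (E : YDData k H M) (E' : YDData k H N) (φ : M →ₗ[k] N) : Prop :=
  φ ∘ₗ E.act = E'.act ∘ₗ map LinearMap.id φ ∧
  E'.coact ∘ₗ φ = map LinearMap.id φ ∘ₗ E.coact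

/-- The braiding of `𝓛𝓡(H)`: `m ⊗ n ↦ m₍₋₁₎·n₍₀₎ ⊗ m₍₀₎·n₍₁₎`. -/
def cLR (D : LRData k H M) (D' : LRData k H N) : M ⊗[k] N →ₗ[k] N ⊗[k] M :=
  map D'.aL D.aR ∘ₗ (tensorTensorTensorComm k H M N H).toLinearMap ∘ₗ map D.cL D'.cR

/-- The inverse braiding of `𝓛𝓡(H)` (`T` is the inverse of the antipode):
`n ⊗ m ↦ m₍₀₎·S⁻¹(n₍₁₎) ⊗ S⁻¹(m₍₋₁₎)·n₍₀₎`. -/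
def cLRinv (D : LRData k H M) (D' : LRData k H N) (T : H →ₗ[k] H) :
    N ⊗[k] M →ₗ[k] M ⊗[k] N :=
  map D.aR D'.aL ∘ₗ
    (TensorProduct.comm k (H ⊗[k] N) (M ⊗[k] H)).toLinearMap ∘ₗ
    (tensorTensorTensorComm k H M N H).toLinearMap ∘ₗ
    (TensorProduct.comm k (N ⊗[k] H) (H ⊗[k] M)).toLinearMap ∘ₗ
    map (map LinearMap.id T) (map T LinearMap.id) ∘ₗ map D'.cR D.cL

/-- The braiding of the Yetter-Drinfeld category over `H ⊗ H^*`: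
`m ⊗ n ↦ m₍₋₁₎·n ⊗ m₍₀₎`, built from the coaction on `M` and the action on `N`. -/
def cYD (C : M →ₗ[k] X k H ⊗[k] M) (A' : X k H ⊗[k] N →ₗ[k] N) : M ⊗[k] N →ₗ[k] N ⊗[k] M :=
  map A' LinearMap.id ∘ₗ (TensorProduct.assoc k (X k H) N M).symm.toLinearMap ∘ₗ
    map LinearMap.id (TensorProduct.comm k M N).toLinearMap ∘ₗ
    (TensorProduct.assoc k (X k H) M N).toLinearMap ∘ₗ map C LinearMap.id

end

end YDL

/-! Write `x ↦ x₁ ⊗ x₂` for the comultiplication of `H ⊗ H^*` and `m ↦ m₍₋₁₎ ⊗ m₍₀₎` for the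
coaction. By coassociativity of the coaction, `(m · h)₍₋₁₎ ⊗ (m · h)₍₀₎` and
`m₍₋₁₎ ⊗ m₍₀₎ · h` are obtained from `(m₍₋₁₎)₁ ⊗ (m₍₋₁₎)₂ ⊗ m₍₀₎` by applying `ξ_h ⊗ π` resp.
`π ⊗ ξ_h` to the first two factors, where `ξ_h (a ⊗ f) = ε(a) f(h)` and `π (a ⊗ f) = f(1) a`.
On `a ⊗ f` both contractions of `Δ(a ⊗ f)` give `f(h · 1) a = f(1 · h) a = f(h) a`, since the
comultiplication of `H^*` is dual to the multiplication of `H`; so both sides equal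
`πAt h (m₍₋₁₎) ⊗ m₍₀₎` with `πAt h (a ⊗ f) = f(h) a`. -/

namespace YDL
open TensorProduct LinearMap Module

noncomputable section

section Contraction

variable {R A B P M N : Type} [CommRing R] [AddCommGroup A] [Module R A] [AddCommGroup B]
  [Module R B] [AddCommGroup P] [Module R P] [AddCommGroup M] [Module R M] [AddCommGroup N]
  [Module R N]

lemma apply_lid_rTensor (f : M →ₗ[R] N) (φ : A →ₗ[R] R) (z : A ⊗[R] M) :
    f (TensorProduct.lid R M (rTensor M φ z)) = TensorProduct.lid R N (map φ f z) := by
  induction z using TensorProduct.induction_on with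
  | zero => simp
  | tmul a m => simp
  | add z z' hz hz' => simp only [map_add, hz, hz']

lemma lid_map_rTensor_assoc (φ : A →ₗ[R] R) (ψ : B →ₗ[R] P) (w : (A ⊗[R] B) ⊗[R] M) :
    TensorProduct.lid R (P ⊗[R] M) (map φ (rTensor M ψ) (TensorProduct.assoc R A B M w))
      = rTensor M (TensorProduct.lid R P ∘ₗ map φ ψ) w := by
  induction w using TensorProduct.induction_on with
  | zero => simp
  | tmul x m =>
    induction x using TensorProduct.induction_on with
    | zero => simp
    | tmul a b => simp [smul_tmul']
    | add x x' hx hx' => simp only [add_tmul, map_add, hx, hx']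
  | add w w' hw hw' => simp only [map_add, hw, hw']

lemma map_lid_rTensor_assoc (ψ : A →ₗ[R] P) (φ : B →ₗ[R] R) (w : (A ⊗[R] B) ⊗[R] M) :
    map ψ (TensorProduct.lid R M ∘ₗ rTensor M φ) (TensorProduct.assoc R A B M w)
      = rTensor M (TensorProduct.rid R P ∘ₗ map ψ φ) w := by
  induction w using TensorProduct.induction_on with
  | zero => simp
  | tmul x m =>
    induction x using TensorProduct.induction_on with
    | zero => simp
    | tmul a b => simp [smul_tmul', tmul_smul]
    | add x x' hx hx' => simp only [add_tmul, map_add, hx, hx']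
  | add w w' hw hw' => simp only [map_add, hw, hw']

end Contraction

variable {k : Type} [Field k] {H : Type} [Ring H] [Bialgebra k H]

variable (k H) in
def ξAt (h : H) : X k H →ₗ[k] k := ξX k H ∘ₗ (TensorProduct.mk k (X k H) H).flip h

variable (k H) in
def πAt (h : H) : X k H →ₗ[k] H :=
  (TensorProduct.rid k H).toLinearMap ∘ₗ lTensor H (applyₗ h)

@[simp]
lemma ξAt_tmul (h a : H) (f : Module.Dual k H) :
    ξAt k H h (a ⊗ₜ f) = Coalgebra.counit a * f h := by
  simp [ξAt, ξX]

@[simp]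
lemma πAt_tmul (h a : H) (f : Module.Dual k H) : πAt k H h (a ⊗ₜ f) = f h • a := by
  simp [πAt]

@[simp]
lemma πH_tmul (a : H) (f : Module.Dual k H) : πH k H (a ⊗ₜ f) = f 1 • a := by
  simp [πH, εD]

variable {M : Type} [AddCommGroup M] [Module k M]

lemma gR_tmul (C : M →ₗ[k] X k H ⊗[k] M) (m : M) (h : H) :
    gR C (m ⊗ₜ h) = TensorProduct.lid k M (rTensor M (ξAt k H h) (C m)) := by
  simp only [gR, coe_comp, Function.comp_apply, LinearEquiv.coe_coe, map_tmul, id_coe, id_eq]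
  induction C m using TensorProduct.induction_on with
  | zero => simp
  | tmul x m' => simp [ξAt]
  | add z z' hz hz' => simp only [add_tmul, map_add, hz, hz']

lemma lid_map_ξAt_πH_tensorTensorTensorComm (h : H) (u : H ⊗[k] H)
    (v : Module.Dual k H ⊗[k] Module.Dual k H) :
    TensorProduct.lid k H (map (ξAt k H h) (πH k H)
        (tensorTensorTensorComm k H H (Module.Dual k H) (Module.Dual k H) (u ⊗ₜ v)))
      = LinearMap.mul' k k (map (applyₗ h) (applyₗ 1) v) •
          TensorProduct.lid k H (rTensor H Coalgebra.counit u) := by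
  induction u using TensorProduct.induction_on with
  | zero => simp
  | add u u' hu hu' => simp only [add_tmul, map_add, smul_add, hu, hu']
  | tmul a a' =>
    induction v using TensorProduct.induction_on with
    | zero => simp
    | add v v' hv hv' => simp only [tmul_add, map_add, add_smul, hv, hv']
    | tmul f f' => simp [smul_smul, mul_comm, mul_left_comm]

lemma rid_map_πH_ξAt_tensorTensorTensorComm (h : H) (u : H ⊗[k] H)
    (v : Module.Dual k H ⊗[k] Module.Dual k H) :
    TensorProduct.rid k H (map (πH k H) (ξAt k H h)
        (tensorTensorTensorComm k H H (Module.Dual k H) (Module.Dual k H) (u ⊗ₜ v)))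
      = LinearMap.mul' k k (map (applyₗ 1) (applyₗ h) v) •
          TensorProduct.rid k H (lTensor H Coalgebra.counit u) := by
  induction u using TensorProduct.induction_on with
  | zero => simp
  | add u u' hu hu' => simp only [add_tmul, map_add, smul_add, hu, hu']
  | tmul a a' =>
    induction v using TensorProduct.induction_on with
    | zero => simp
    | add v v' hv hv' => simp only [tmul_add, map_add, add_smul, hv, hv']
    | tmul f f' => simp [smul_smul, mul_comm, mul_left_comm]

lemma lTensor_gR_assoc_rTensor_tmul (C : M →ₗ[k] X k H ⊗[k] M) (z : X k H ⊗[k] M) (h : H) :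
    lTensor H (gR C) (TensorProduct.assoc k H M H (rTensor M (πH k H) z ⊗ₜ h))
      = map (πH k H) (TensorProduct.lid k M ∘ₗ rTensor M (ξAt k H h) ∘ₗ C) z := by
  induction z using TensorProduct.induction_on with
  | zero => simp
  | tmul x m => simp [gR_tmul]
  | add z z' hz hz' => simp only [map_add, add_tmul, hz, hz']

variable [FiniteDimensional k H]

lemma mul'_map_applyₗ_ΔD (f : Module.Dual k H) (a b : H) :
    LinearMap.mul' k k (map (applyₗ a) (applyₗ b) (ΔD k H f)) = f (a * b) := by
  have hdual : TensorProduct.dualDistrib k H H (ΔD k H f) = (LinearMap.mul' k H).dualMap f :=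
    (TensorProduct.dualDistribEquiv k H H).apply_symm_apply _
  calc LinearMap.mul' k k (map (applyₗ a) (applyₗ b) (ΔD k H f))
      = TensorProduct.dualDistrib k H H (ΔD k H f) (a ⊗ₜ b) := by
        induction ΔD k H f using TensorProduct.induction_on with
        | zero => simp
        | tmul g g' => simp
        | add v v' hv hv' => simp only [map_add, hv, hv', LinearMap.add_apply]
    _ = f (a * b) := by rw [hdual]; simp

lemma ΔX_tmul (a : H) (f : Module.Dual k H) :
    ΔX k H (a ⊗ₜ f) = tensorTensorTensorComm k H H (Module.Dual k H) (Module.Dual k H)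
      (Coalgebra.comul a ⊗ₜ ΔD k H f) := rfl

lemma lid_comp_map_ξAt_πH_comp_ΔX (h : H) :
    (TensorProduct.lid k H).toLinearMap ∘ₗ map (ξAt k H h) (πH k H) ∘ₗ ΔX k H = πAt k H h := by
  refine TensorProduct.ext' fun a f => ?_
  simp [ΔX_tmul, lid_map_ξAt_πH_tensorTensorTensorComm, mul'_map_applyₗ_ΔD]

lemma rid_comp_map_πH_ξAt_comp_ΔX (h : H) :
    (TensorProduct.rid k H).toLinearMap ∘ₗ map (πH k H) (ξAt k H h) ∘ₗ ΔX k H = πAt k H h := by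
  refine TensorProduct.ext' fun a f => ?_
  simp [ΔX_tmul, rid_map_πH_ξAt_tensorTensorTensorComm, mul'_map_applyₗ_ΔD]

section Coassociative

variable {C : M →ₗ[k] X k H ⊗[k] M}
  (hC : (TensorProduct.assoc k (X k H) (X k H) M).toLinearMap ∘ₗ
      map (ΔX k H) LinearMap.id ∘ₗ C = map LinearMap.id C ∘ₗ C)
include hC

lemma lTensor_coact_coact (m : M) :
    lTensor (X k H) C (C m)
      = TensorProduct.assoc k (X k H) (X k H) M (rTensor M (ΔX k H) (C m)) :=
  (LinearMap.congr_fun hC m).symm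

lemma gcL_gR_tmul (m : M) (h : H) :
    gcL C (gR C (m ⊗ₜ h)) = rTensor M (πAt k H h) (C m) := calc
  gcL C (gR C (m ⊗ₜ h))
      = TensorProduct.lid k (H ⊗[k] M) (map (ξAt k H h) (rTensor M (πH k H) ∘ₗ C) (C m)) := by
    rw [gR_tmul]
    exact apply_lid_rTensor (rTensor M (πH k H) ∘ₗ C) _ _
  _ = TensorProduct.lid k (H ⊗[k] M) (map (ξAt k H h) (rTensor M (πH k H))
        (TensorProduct.assoc k (X k H) (X k H) M (rTensor M (ΔX k H) (C m)))) := by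
    rw [← map_comp_lTensor, LinearMap.comp_apply, lTensor_coact_coact hC]
  _ = rTensor M (πAt k H h) (C m) := by
    rw [lid_map_rTensor_assoc, ← LinearMap.comp_apply (rTensor M _), ← rTensor_comp,
      LinearMap.comp_assoc, lid_comp_map_ξAt_πH_comp_ΔX]

lemma lTensor_gR_assoc_gcL_tmul (m : M) (h : H) :
    lTensor H (gR C) (TensorProduct.assoc k H M H (gcL C m ⊗ₜ h))
      = rTensor M (πAt k H h) (C m) := calc
  lTensor H (gR C) (TensorProduct.assoc k H M H (gcL C m ⊗ₜ h))
      = map (πH k H) (TensorProduct.lid k M ∘ₗ rTensor M (ξAt k H h) ∘ₗ C) (C m) :=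
    lTensor_gR_assoc_rTensor_tmul C (C m) h
  _ = map (πH k H) (TensorProduct.lid k M ∘ₗ rTensor M (ξAt k H h))
        (TensorProduct.assoc k (X k H) (X k H) M (rTensor M (ΔX k H) (C m))) := by
    rw [← LinearMap.comp_assoc, ← map_comp_lTensor, LinearMap.comp_apply,
      lTensor_coact_coact hC]
  _ = rTensor M (πAt k H h) (C m) := by
    rw [map_lid_rTensor_assoc, ← LinearMap.comp_apply (rTensor M _), ← rTensor_comp,
      LinearMap.comp_assoc, rid_comp_map_πH_ξAt_comp_ΔX]

end Coassociative

end

/-- the induced structures on a Yetter-Drinfeld module over `H ⊗ H^*`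
satisfy the right-left Long compatibility. -/
theorem statement8 {k : Type} [Field k] {H : Type} [Ring H] [Bialgebra k H]
    [FiniteDimensional k H] {M : Type} [AddCommGroup M] [Module k M]
    (E : YDData k H M) (hE : IsYD E) :
    Cond4 (Gdata E) := by
  refine TensorProduct.ext' fun m h => ?_
  have hC := hE.xcom.coassoc
  exact (gcL_gR_tmul hC m h).trans (lTensor_gR_assoc_gcL_tmul hC m h).symm

end YDL
end

section
/- The functor $F:\mathcal{LR}(H)\to{}^{H\otimes H^*}_{H\otimes H^*}\mathcal{YD}$ is compatible with braidings: for $M,N\in\mathcal{LR}(H)$ and $m\in M$, $n\in N$, one has $m_{[-1]}\cdot n\otimes m_{[0]} = m_{(-1)}\cdot n_{\langle 0\rangle}\otimes m_{(0)}\cdot n_{\langle 1\rangle}$, i.e. the Yetter-Drinfeld braiding of ${}^{H\otimes H^*}_{H\otimes H^*}\mathcal{YD}$ restricts to the braiding $c_{M,N}(m\otimes n)=m_{(-1)}\cdot n_{\langle 0\rangle}\otimes m_{(0)}\cdot n_{\langle 1\rangle}$ of $\mathcal{LR}(H)$. -/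
/- Common setup: Yetter-Drinfeld-Long bimodules over a bialgebra `H`, and
Yetter-Drinfeld modules over the tensor product bialgebra `H ⊗ H^*`. -/

open TensorProduct LinearMap Module

namespace YDL
open TensorProduct LinearMap Module

/-! Unwinding `F` gives `m₍₋₁₎·n ⊗ m₍₀₎ = ∑ᵢ ⟨hⁱ, n₍₁₎⟩ m₍₋₁₎·n₍₀₎ ⊗ m₍₀₎·hᵢ`; the dual basis
identity `∑ᵢ ⟨hⁱ, x⟩ hᵢ = x`, applied to the `H`-leg of `n₍₀₎ ⊗ n₍₁₎`, collapses the sum to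
`m₍₋₁₎·n₍₀₎ ⊗ m₍₀₎·n₍₁₎`. -/

theorem _root_.Module.Basis.sum_rid_lTensor_coord_tmul {R N V ι : Type*} [CommRing R]
    [AddCommGroup N] [Module R N] [AddCommGroup V] [Module R V] [Fintype ι]
    (b : Basis ι R V) (t : N ⊗[R] V) :
    ∑ i, TensorProduct.rid R N (lTensor N (b.coord i) t) ⊗ₜ b i = t := by
  induction t using TensorProduct.induction_on with
  | zero => simp
  | add t t' ht ht' =>
    simp only [map_add, TensorProduct.add_tmul, Finset.sum_add_distrib, ht, ht']
  | tmul n v =>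
    simp only [lTensor_tmul, rid_tmul, Basis.coord_apply, TensorProduct.smul_tmul,
      ← TensorProduct.tmul_sum, b.sum_repr]

section

variable {k : Type} [Field k] {H : Type} [Ring H] [Bialgebra k H]
  {M N : Type} [AddCommGroup M] [Module k M] [AddCommGroup N] [Module k N]

theorem evR_tmul (cR : M →ₗ[k] M ⊗[k] H) (f : Module.Dual k H) (m : M) :
    evR cR (f ⊗ₜ m) = TensorProduct.rid k M (lTensor M f (cR m)) := by
  simp only [evR, comp_apply, map_tmul, id_coe, id_eq, LinearEquiv.coe_coe]
  induction cR m using TensorProduct.induction_on with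
  | zero => simp
  | add t t' ht ht' => simp only [map_add, TensorProduct.tmul_add, ht, ht']
  | tmul m₀ h => simp

theorem Fact_tmul (D : LRData k H M) (h : H) (f : Module.Dual k H) (m : M) :
    Fact D ((h ⊗ₜ f) ⊗ₜ m) = D.aL (h ⊗ₜ evR D.cR (f ⊗ₜ m)) :=
  rfl

theorem insD_apply [FiniteDimensional k H] (aR : M ⊗[k] H →ₗ[k] M) (m : M) :
    insD aR m =
      ∑ i, (Basis.ofVectorSpace k H).coord i ⊗ₜ aR (m ⊗ₜ Basis.ofVectorSpace k H i) := by
  simp [insD, canel, coevaluation_apply_one]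

theorem cYD_tmul [FiniteDimensional k H] (C : M →ₗ[k] X k H ⊗[k] M)
    (A' : X k H ⊗[k] N →ₗ[k] N) (m : M) (n : N) :
    cYD C A' (m ⊗ₜ n) = rTensor M (A' ∘ₗ (TensorProduct.mk k (X k H) N).flip n) (C m) := by
  simp only [cYD, comp_apply, map_tmul, id_coe, id_eq, LinearEquiv.coe_coe]
  induction C m using TensorProduct.induction_on with
  | zero => simp
  | add t t' ht ht' => simp only [map_add, TensorProduct.add_tmul, ht, ht']
  | tmul x m₀ => simp

end

theorem statement10_general {k : Type} [Field k] {H : Type} [Ring H] [HopfAlgebra k H]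
    [FiniteDimensional k H] {M N : Type} [AddCommGroup M] [Module k M]
    [AddCommGroup N] [Module k N]
    (D : LRData k H M) (D' : LRData k H N) :
    cYD (Fco D) (Fact D') = cLR D D' := by
  refine TensorProduct.ext' fun m n => ?_
  simp only [cYD_tmul, Fco, cLR, comp_apply, map_tmul, LinearEquiv.coe_coe]
  induction D.cL m using TensorProduct.induction_on with
  | zero => simp
  | add s s' hs hs' => simp only [map_add, TensorProduct.add_tmul, hs, hs']
  | tmul a m₀ =>
    conv_rhs => rw [← (Basis.ofVectorSpace k H).sum_rid_lTensor_coord_tmul (D'.cR n)]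
    simp [insD_apply, Fact_tmul, evR_tmul, TensorProduct.tmul_sum]

/-- the functor `F` is compatible with the braidings:
`m₍₋₁₎·n ⊗ m₍₀₎ = m₍₋₁₎·n₍₀₎ ⊗ m₍₀₎·n₍₁₎`, i.e. the Yetter-Drinfeld braiding over
`H ⊗ H^*` restricts to the braiding of `𝓛𝓡(H)`. -/
theorem statement10 {k : Type} [Field k] {H : Type} [Ring H] [HopfAlgebra k H]
    [FiniteDimensional k H] {M N : Type} [AddCommGroup M] [Module k M]
    [AddCommGroup N] [Module k N]
    (hbij : Function.Bijective (HopfAlgebra.antipode (R := k) (A := H)))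
    (D : LRData k H M) (D' : LRData k H N) (hD : IsLR D) (hD' : IsLR D') :
    cYD (Fco D) (Fact D') = cLR D D' :=
  statement10_general D D'

end YDL
end

section
/- Let $H$ be a Hopf algebra with bijective antipode $S$. The braiding $c_{M,N}(m\otimes n)=m_{(-1)}\cdot n_{\langle 0\rangle}\otimes m_{(0)}\cdot n_{\langle 1\rangle}$ on the category of Yetter-Drinfeld-Long bimodules has inverse $c^{-1}_{M,N}(n\otimes m)=m_{(0)}\cdot S^{-1}(n_{\langle 1\rangle})\otimes S^{-1}(m_{(-1)})\cdot n_{\langle 0\rangle}$, i.e. $c^{-1}_{M,N}\circ c_{M,N}=\mathrm{id}_{M\otimes N}$ and $c_{M,N}\circ c^{-1}_{M,N}=\mathrm{id}_{N\otimes M}$. -/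
/- Common setup: Yetter-Drinfeld-Long bimodules over a bialgebra `H`, and
Yetter-Drinfeld modules over the tensor product bialgebra `H ⊗ H^*`. -/

open TensorProduct LinearMap Module

/-! Write `c_{τ,σ}(m ⊗ n) = τ(m₍₋₁₎)·n₍₀₎ ⊗ m₍₀₎·σ(n₍₁₎)` for linear `τ, σ : H → H`, so that
`c = c_{id,id}` and `c⁻¹ = flip ∘ c_{S⁻¹,S⁻¹} ∘ flip`. The Long conditions let each coaction pass
through the action on the other factor, and coassociativity then gives the composition law
`c_{τ,σ} ∘ flip ∘ c_{τ',σ'} = c_{τ ⋆ τ', σ' ⋆ σ}`, where `⋆` is the convolution of `Hᶜᵒᵖ`.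
Since `S⁻¹` is the antipode of `Hᶜᵒᵖ`, both composites of the theorem become `flip ∘ c_{ηε,ηε}`,
which is `flip ∘ flip = id` by the counit and unit axioms. -/

namespace YDL
open TensorProduct LinearMap Module

section CopConvolution

variable {R A : Type*} [CommSemiring R] [Semiring A]

/-- The convolution product of `Aᶜᵒᵖ`: `h ↦ f h₍₂₎ * g h₍₁₎`. -/
def copConv [Bialgebra R A] (f g : A →ₗ[R] A) : A →ₗ[R] A :=
  mul' R A ∘ₗ (TensorProduct.comm R A A).toLinearMap ∘ₗ map g f ∘ₗ Coalgebra.comul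

variable [HopfAlgebra R A] {T : A →ₗ[R] A}

private lemma eq_unit_counit_of_antipode_comp (hT : T ∘ₗ HopfAlgebra.antipode R = LinearMap.id)
    {f : A →ₗ[R] A}
    (hf : HopfAlgebra.antipode R ∘ₗ f = Algebra.linearMap R A ∘ₗ Coalgebra.counit) :
    f = Algebra.linearMap R A ∘ₗ Coalgebra.counit := by
  have hS : HopfAlgebra.antipode R ∘ₗ Algebra.linearMap R A ∘ₗ Coalgebra.counit
      = Algebra.linearMap R A ∘ₗ (Coalgebra.counit : A →ₗ[R] R) := by
    ext a; simp [Algebra.algebraMap_eq_smul_one]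
  calc f = (T ∘ₗ HopfAlgebra.antipode R) ∘ₗ f := by rw [hT, id_comp]
    _ = (T ∘ₗ HopfAlgebra.antipode R) ∘ₗ Algebra.linearMap R A ∘ₗ Coalgebra.counit := by
      rw [comp_assoc, hf, comp_assoc, hS]
    _ = _ := by rw [hT, id_comp]

lemma copConv_inverse_antipode_id (hT1 : T ∘ₗ HopfAlgebra.antipode R = LinearMap.id)
    (hT2 : HopfAlgebra.antipode R ∘ₗ T = LinearMap.id) :
    copConv T LinearMap.id = Algebra.linearMap R A ∘ₗ Coalgebra.counit := by
  refine eq_unit_counit_of_antipode_comp hT1 ?_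
  calc HopfAlgebra.antipode R ∘ₗ copConv T LinearMap.id
      = (HopfAlgebra.antipode R ∘ₗ mul' R A ∘ₗ (TensorProduct.comm R A A).toLinearMap) ∘ₗ
          map LinearMap.id T ∘ₗ Coalgebra.comul := by simp only [copConv, comp_assoc]
    _ = mul' R A ∘ₗ (HopfAlgebra.antipode R).rTensor A ∘ₗ Coalgebra.comul := by
      rw [HopfAlgebra.antipode_comp_mul_comp_comm, comp_assoc, ← comp_assoc _ _ (map _ _),
        ← map_comp, hT2, comp_id]; rfl
    _ = _ := HopfAlgebra.mul_antipode_rTensor_comul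

lemma copConv_id_inverse_antipode (hT1 : T ∘ₗ HopfAlgebra.antipode R = LinearMap.id)
    (hT2 : HopfAlgebra.antipode R ∘ₗ T = LinearMap.id) :
    copConv LinearMap.id T = Algebra.linearMap R A ∘ₗ Coalgebra.counit := by
  refine eq_unit_counit_of_antipode_comp hT1 ?_
  calc HopfAlgebra.antipode R ∘ₗ copConv LinearMap.id T
      = (HopfAlgebra.antipode R ∘ₗ mul' R A ∘ₗ (TensorProduct.comm R A A).toLinearMap) ∘ₗ
          map T LinearMap.id ∘ₗ Coalgebra.comul := by simp only [copConv, comp_assoc]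
    _ = mul' R A ∘ₗ (HopfAlgebra.antipode R).lTensor A ∘ₗ Coalgebra.comul := by
      rw [HopfAlgebra.antipode_comp_mul_comp_comm, comp_assoc, ← comp_assoc _ _ (map _ _),
        ← map_comp, hT2, comp_id]; rfl
    _ = _ := HopfAlgebra.mul_antipode_lTensor_comul

end CopConvolution

section Braiding

variable {k : Type} [Field k] {H : Type} [Ring H] [Bialgebra k H]
  {M N : Type} [AddCommGroup M] [Module k M] [AddCommGroup N] [Module k N]
  (D : LRData k H M) (D' : LRData k H N)

def crossAct : (H ⊗[k] M) ⊗[k] (N ⊗[k] H) →ₗ[k] N ⊗[k] M :=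
  map D'.aL D.aR ∘ₗ (tensorTensorTensorComm k H M N H).toLinearMap

@[simp] lemma crossAct_tmul (g h : H) (m : M) (n : N) :
    crossAct D D' ((g ⊗ₜ m) ⊗ₜ (n ⊗ₜ h)) = D'.aL (g ⊗ₜ n) ⊗ₜ D.aR (m ⊗ₜ h) := rfl

/-- `m ⊗ n ↦ τ(m₍₋₁₎)·n₍₀₎ ⊗ m₍₀₎·σ(n₍₁₎)`. -/
def twistedBraid (τ σ : H →ₗ[k] H) : M ⊗[k] N →ₗ[k] N ⊗[k] M :=
  crossAct D D' ∘ₗ map (map τ LinearMap.id ∘ₗ D.cL) (map LinearMap.id σ ∘ₗ D'.cR)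

lemma cLR_eq_twistedBraid : cLR D D' = twistedBraid D D' LinearMap.id LinearMap.id := by
  simp only [twistedBraid, map_id, id_comp]; rfl

lemma cLRinv_eq_twistedBraid (T : H →ₗ[k] H) :
    cLRinv D D' T = (TensorProduct.comm k N M).toLinearMap ∘ₗ twistedBraid D D' T T ∘ₗ
      (TensorProduct.comm k N M).toLinearMap := by
  apply TensorProduct.ext'
  intro n m
  simp only [cLRinv, twistedBraid, comp_apply, map_tmul, LinearEquiv.coe_coe, comm_tmul]
  induction D'.cR n using TensorProduct.induction_on with
  | zero => simp
  | add y₁ y₂ h₁ h₂ => simp only [map_add, tmul_add, h₁, h₂]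
  | tmul n' h =>
    induction D.cL m using TensorProduct.induction_on with
    | zero => simp
    | add x₁ x₂ h₁ h₂ => simp only [map_add, add_tmul, h₁, h₂]
    | tmul g m' => simp [tensorTensorTensorComm_tmul]

lemma IsLCom.map_unit_counit_coaction {D : LRData k H M} (hD : IsLCom D) (m : M) :
    map (Algebra.linearMap k H ∘ₗ Coalgebra.counit) LinearMap.id (D.cL m) = 1 ⊗ₜ m := by
  have hε : map Coalgebra.counit LinearMap.id (D.cL m) = 1 ⊗ₜ[k] m := by
    apply (TensorProduct.lid k M).injective
    simpa using congr($(hD.counit) m)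
  rw [← comp_id LinearMap.id, map_comp, comp_apply, hε]
  simp

lemma IsRCom.map_unit_counit_coaction {D : LRData k H M} (hD : IsRCom D) (m : M) :
    map LinearMap.id (Algebra.linearMap k H ∘ₗ Coalgebra.counit) (D.cR m) = m ⊗ₜ 1 := by
  have hε : map LinearMap.id Coalgebra.counit (D.cR m) = m ⊗ₜ[k] (1 : k) := by
    apply (TensorProduct.rid k M).injective
    simpa using congr($(hD.counit) m)
  rw [← comp_id LinearMap.id, map_comp, comp_apply, hε]
  simp

variable {D D'} in
lemma twistedBraid_unit_counit (hDc : IsLCom D) (hD'c : IsRCom D') (hDm : IsRMod D)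
    (hD'm : IsLMod D') :
    twistedBraid D D' (Algebra.linearMap k H ∘ₗ Coalgebra.counit)
      (Algebra.linearMap k H ∘ₗ Coalgebra.counit) = (TensorProduct.comm k M N).toLinearMap := by
  apply TensorProduct.ext'
  intro m n
  simp [twistedBraid, hDc.map_unit_counit_coaction, hD'c.map_unit_counit_coaction,
    hDm.act_one, hD'm.one_act]

variable {D D'} in
lemma twistedBraid_comp_comm_comp_crossAct (hD4 : Cond4 D) (hD'2 : Cond2 D') (hDm : IsRMod D)
    (hD'm : IsLMod D') (τ σ τ' σ' : H →ₗ[k] H) :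
    twistedBraid D D' τ σ ∘ₗ (TensorProduct.comm k N M).toLinearMap ∘ₗ crossAct D D' ∘ₗ
      map (map τ' LinearMap.id) (map LinearMap.id σ')
    = crossAct D D' ∘ₗ map
        (map (mul' k H ∘ₗ (TensorProduct.comm k H H).toLinearMap ∘ₗ map τ' τ) LinearMap.id ∘ₗ
          (TensorProduct.assoc k H H M).symm.toLinearMap ∘ₗ map LinearMap.id D.cL)
        (map LinearMap.id (mul' k H ∘ₗ (TensorProduct.comm k H H).toLinearMap ∘ₗ map σ σ') ∘ₗ
          (TensorProduct.assoc k N H H).toLinearMap ∘ₗ map D'.cR LinearMap.id) := by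
  apply TensorProduct.ext_fourfold'
  intro g m n h
  have h4 := congr($hD4 (m ⊗ₜ σ' h))
  have h2 := congr($hD'2 (τ' g ⊗ₜ n))
  simp only [comp_apply, map_tmul, LinearEquiv.coe_coe, id_coe, id_eq] at h4 h2
  simp only [twistedBraid, comp_apply, map_tmul, LinearEquiv.coe_coe, id_coe, id_eq,
    crossAct_tmul, comm_tmul, h4, h2]
  induction D.cL m using TensorProduct.induction_on with
  | zero => simp
  | add x₁ x₂ h₁ h₂ => simp only [map_add, add_tmul, tmul_add, h₁, h₂]
  | tmul a m' =>
    induction D'.cR n using TensorProduct.induction_on with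
    | zero => simp
    | add y₁ y₂ h₁ h₂ => simp only [map_add, add_tmul, tmul_add, h₁, h₂]
    | tmul n' b => simp [hDm.act_mul, hD'm.mul_act]

variable {D D'} in
lemma twistedBraid_comp_comm_comp_twistedBraid (hDc : IsLCom D) (hD'c : IsRCom D')
    (hD4 : Cond4 D) (hD'2 : Cond2 D') (hDm : IsRMod D) (hD'm : IsLMod D')
    (τ σ τ' σ' : H →ₗ[k] H) :
    twistedBraid D D' τ σ ∘ₗ (TensorProduct.comm k N M).toLinearMap ∘ₗ twistedBraid D D' τ' σ'
      = twistedBraid D D' (copConv τ τ') (copConv σ' σ) := by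
  have hL : (TensorProduct.assoc k H H M).symm.toLinearMap ∘ₗ map LinearMap.id D.cL ∘ₗ D.cL
      = map Coalgebra.comul LinearMap.id ∘ₗ D.cL := by
    rw [← hDc.coassoc]; ext; simp
  have hR : (TensorProduct.assoc k N H H).toLinearMap ∘ₗ map D'.cR LinearMap.id ∘ₗ D'.cR
      = map LinearMap.id Coalgebra.comul ∘ₗ D'.cR := hD'c.coassoc
  calc _ = (twistedBraid D D' τ σ ∘ₗ (TensorProduct.comm k N M).toLinearMap ∘ₗ crossAct D D' ∘ₗ
          map (map τ' LinearMap.id) (map LinearMap.id σ')) ∘ₗ map D.cL D'.cR := by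
        simp only [twistedBraid, comp_assoc, ← map_comp]
    _ = _ := by
      rw [twistedBraid_comp_comm_comp_crossAct hD4 hD'2 hDm hD'm]
      simp only [comp_assoc, ← map_comp, hL, hR]
      simp only [twistedBraid, copConv, ← comp_assoc, ← map_comp, id_comp]

end Braiding

/-- the braiding `c(m ⊗ n) = m₍₋₁₎·n₍₀₎ ⊗ m₍₀₎·n₍₁₎` of the category of
Yetter-Drinfeld-Long bimodules has inverse
`c⁻¹(n ⊗ m) = m₍₀₎·S⁻¹(n₍₁₎) ⊗ S⁻¹(m₍₋₁₎)·n₍₀₎`. -/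
theorem statement11 {k : Type} [Field k] {H : Type} [Ring H] [HopfAlgebra k H]
    {M N : Type} [AddCommGroup M] [Module k M] [AddCommGroup N] [Module k N]
    (T : H →ₗ[k] H) (hT1 : T ∘ₗ (HopfAlgebra.antipode (R := k) (A := H)) = LinearMap.id)
    (hT2 : (HopfAlgebra.antipode (R := k) (A := H)) ∘ₗ T = LinearMap.id)
    (D : LRData k H M) (D' : LRData k H N) (hD : IsLR D) (hD' : IsLR D') :
    cLRinv D D' T ∘ₗ cLR D D' = LinearMap.id ∧
    cLR D D' ∘ₗ cLRinv D D' T = LinearMap.id := by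
  have hcomp := twistedBraid_comp_comm_comp_twistedBraid hD.lcom hD'.rcom hD.cond4 hD'.cond2
    hD.rmod hD'.lmod
  have hunit := twistedBraid_unit_counit hD.lcom hD'.rcom hD.rmod hD'.lmod
  rw [cLR_eq_twistedBraid, cLRinv_eq_twistedBraid]
  constructor
  · rw [comp_assoc, comp_assoc, hcomp, copConv_inverse_antipode_id hT1 hT2,
      copConv_id_inverse_antipode hT1 hT2, hunit, comm_comp_comm]
  · rw [← comp_assoc, ← comp_assoc, comp_assoc _ _ (twistedBraid _ _ _ _), hcomp,
      copConv_inverse_antipode_id hT1 hT2, copConv_id_inverse_antipode hT1 hT2, hunit,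
      comm_comp_comm]

end YDL
end

section
/- Let $H$ be a finite-dimensional bialgebra and $M$, $N$ Yetter-Drinfeld-Long bimodules over $H$. The $H\otimes H^*$-comodule structure on $M\otimes N$ induced by $F$ from the $\mathcal{LR}(H)$ tensor structure coincides with the codiagonal coaction on $F(M)\otimes F(N)$: $\sum_i (m\otimes n)_{(-1)}\otimes h^i\otimes (m\otimes n)_{(0)}\cdot h_i = m_{[-1]}n_{[-1]}\otimes m_{[0]}\otimes n_{[0]}$, where $m_{[-1]}\otimes m_{[0]} = \sum_i m_{(-1)}\otimes h^i\otimes m_{(0)}\cdot h_i$. -/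
/- Common setup: Yetter-Drinfeld-Long bimodules over a bialgebra `H`, and
Yetter-Drinfeld modules over the tensor product bialgebra `H ⊗ H^*`. -/

open TensorProduct LinearMap Module

/-! The element `ρ(m) = ∑ hⁱ ⊗ m·hᵢ` of `H^* ⊗ M` is the preimage of `h ↦ m·h` under the
isomorphism `H^* ⊗ M ≅ Hom(H, M)`. On `M ⊗ N` this map is `h ↦ m·h₁ ⊗ n·h₂`, and since the
product of `H^*` is dual to the coproduct of `H`, the codiagonal element
`∑ hⁱhʲ ⊗ m·hᵢ ⊗ n·hⱼ` corresponds to the same map. The `H`-components `m₍₋₁₎n₍₋₁₎` agree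
because the product of `H ⊗ H^*` is componentwise. -/

open TensorProduct LinearMap Module

theorem dualTensorHom_sum_coord_tmul {R V W ι : Type*} [CommSemiring R] [AddCommMonoid V]
    [Module R V] [AddCommMonoid W] [Module R W] [Fintype ι] (b : Basis ι R V) (f : V →ₗ[R] W) :
    dualTensorHom R V W (∑ i, b.coord i ⊗ₜ f (b i)) = f := by
  classical
  refine b.ext fun j => ?_
  simp [Finsupp.single_apply]

theorem dualTensorHom_comm_coevaluation (K V : Type*) [Field K] [AddCommGroup V] [Module K V]
    [FiniteDimensional K V] :
    dualTensorHom K V V (TensorProduct.comm K V (Dual K V) (coevaluation K V 1)) = LinearMap.id := by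
  simpa [coevaluation_apply_one] using
    dualTensorHom_sum_coord_tmul (Basis.ofVectorSpace K V) LinearMap.id

namespace YDL

section

variable {k : Type} [Field k] {H : Type} [Ring H] [Bialgebra k H]
  {M N : Type} [AddCommGroup M] [Module k M] [AddCommGroup N] [Module k N]

theorem dualTensorHom_convL_tmul (t : Dual k H ⊗[k] M) (s : Dual k H ⊗[k] N) :
    dualTensorHom k H (M ⊗[k] N) (map (convL k H) LinearMap.id
        (tensorTensorTensorComm k (Dual k H) M (Dual k H) N (t ⊗ₜ s))) =
      map (dualTensorHom k H M t) (dualTensorHom k H N s) ∘ₗ Coalgebra.comul := by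
  induction t using TensorProduct.induction_on with
  | zero => ext; simp
  | add x y hx hy => simp only [add_tmul, map_add, hx, hy, map_add_left, add_comp]
  | tmul f m =>
    induction s using TensorProduct.induction_on with
    | zero => ext; simp
    | add x y hx hy => simp only [tmul_add, map_add, hx, hy, map_add_right, add_comp]
    | tmul g n =>
      rw [tensorTensorTensorComm_tmul, map_tmul, map_dualTensorHom]
      ext h
      simp [convL]

theorem tensorLR_aR_comp_mk (D : LRData k H M) (D' : LRData k H N) (m : M) (n : N) :
    (tensorLR D D').aR ∘ₗ TensorProduct.mk k _ H (m ⊗ₜ n) =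
      map (D.aR ∘ₗ TensorProduct.mk k M H m) (D'.aR ∘ₗ TensorProduct.mk k N H n) ∘ₗ
        Coalgebra.comul := by
  ext h
  simp only [tensorLR, coe_comp, LinearEquiv.coe_coe, Function.comp_apply, mk_apply, map_tmul,
    LinearMap.id_coe, id_eq]
  induction (Coalgebra.comul (R := k) h : H ⊗[k] H) using TensorProduct.induction_on with
  | zero => simp
  | add x y hx hy => simp only [tmul_add, map_add, hx, hy]
  | tmul a c => simp

theorem μX_assoc_symm_tmul (h h' : H) (t : Dual k H ⊗[k] M) (s : Dual k H ⊗[k] N) :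
    map (μX k H) LinearMap.id (tensorTensorTensorComm k (X k H) M (X k H) N
        ((TensorProduct.assoc k H (Dual k H) M).symm (h ⊗ₜ t) ⊗ₜ
          (TensorProduct.assoc k H (Dual k H) N).symm (h' ⊗ₜ s))) =
      (TensorProduct.assoc k H (Dual k H) (M ⊗[k] N)).symm ((h * h') ⊗ₜ
        map (convL k H) LinearMap.id
          (tensorTensorTensorComm k (Dual k H) M (Dual k H) N (t ⊗ₜ s))) := by
  induction t using TensorProduct.induction_on with
  | zero => simp
  | add x y hx hy => simp only [tmul_add, add_tmul, map_add, hx, hy]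
  | tmul f m =>
    induction s using TensorProduct.induction_on with
    | zero => simp
    | add x y hx hy => simp only [tmul_add, map_add, hx, hy]
    | tmul g n => simp [μX]

variable [FiniteDimensional k H]

theorem insD_apply_eq_lTensor (aR : M ⊗[k] H →ₗ[k] M) (m : M) :
    insD aR m = (aR ∘ₗ TensorProduct.mk k M H m).lTensor _
      (TensorProduct.comm k H (Dual k H) (canel k H)) := by
  simp only [insD, coe_comp, LinearEquiv.coe_coe, Function.comp_apply, mk_apply]
  induction TensorProduct.comm k H (Dual k H) (canel k H) using TensorProduct.induction_on with
  | zero => simp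
  | add x y hx hy => simp only [add_tmul, map_add, hx, hy]
  | tmul f h => simp

theorem dualTensorHom_insD (aR : M ⊗[k] H →ₗ[k] M) (m : M) :
    dualTensorHom k H M (insD aR m) = aR ∘ₗ TensorProduct.mk k M H m := by
  rw [insD_apply_eq_lTensor, ← LinearMap.comp_apply, dualTensorHom_comp_lTensor, comp_apply,
    canel, dualTensorHom_comm_coevaluation]
  rfl

theorem insD_tensorLR_aR (D : LRData k H M) (D' : LRData k H N) (m : M) (n : N) :
    insD (tensorLR D D').aR (m ⊗ₜ n) = map (convL k H) LinearMap.id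
      (tensorTensorTensorComm k (Dual k H) M (Dual k H) N (insD D.aR m ⊗ₜ insD D'.aR n)) :=
  (dualTensorHom_bijective (R := k)).injective <| by
    rw [dualTensorHom_insD, dualTensorHom_convL_tmul, dualTensorHom_insD, dualTensorHom_insD,
      tensorLR_aR_comp_mk]

end

theorem statement16_general {k : Type} [Field k] {H : Type} [Ring H] [Bialgebra k H]
    [FiniteDimensional k H] {M N : Type} [AddCommGroup M] [Module k M]
    [AddCommGroup N] [Module k N]
    (D : LRData k H M) (D' : LRData k H N) :
    Fco (tensorLR D D') = (tensorYD (Fdata D) (Fdata D')).coact := by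
  refine TensorProduct.ext' fun m n => ?_
  have hcL : (tensorLR D D').cL (m ⊗ₜ n) = map (mul' k H) LinearMap.id
      (tensorTensorTensorComm k H M H N (D.cL m ⊗ₜ D'.cL n)) := rfl
  simp only [Fco, Fdata, tensorYD, coe_comp, LinearEquiv.coe_coe, Function.comp_apply, map_tmul,
    hcL]
  induction D.cL m using TensorProduct.induction_on with
  | zero => simp
  | add x y hx hy => simp only [add_tmul, map_add, hx, hy]
  | tmul h m₀ =>
    induction D'.cL n using TensorProduct.induction_on with
    | zero => simp
    | add x y hx hy => simp only [tmul_add, map_add, hx, hy]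
    | tmul h' n₀ =>
      simp only [tensorTensorTensorComm_tmul, map_tmul, mul'_apply, LinearMap.id_coe, id_eq,
        insD_tensorLR_aR, μX_assoc_symm_tmul]

/-- the `H ⊗ H^*`-coaction induced by `F` on the tensor product `M ⊗ N`
in `𝓛𝓡(H)` coincides with the codiagonal coaction on `F(M) ⊗ F(N)`. -/
theorem statement16 {k : Type} [Field k] {H : Type} [Ring H] [Bialgebra k H]
    [FiniteDimensional k H] {M N : Type} [AddCommGroup M] [Module k M]
    [AddCommGroup N] [Module k N]
    (D : LRData k H M) (D' : LRData k H N) (hD : IsLR D) (hD' : IsLR D') :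
    Fco (tensorLR D D') = (tensorYD (Fdata D) (Fdata D')).coact :=
  statement16_general D D'

end YDL
end

section
/- Let $H$ be a Hopf algebra with bijective antipode and let $M$, $N$, $P$ be Yetter-Drinfeld-Long bimodules over $H$. The braiding $c_{M,N}(m\otimes n)=m_{(-1)}\cdot n_{\langle 0\rangle}\otimes m_{(0)}\cdot n_{\langle 1\rangle}$ satisfies the hexagon identities: $c_{M,N\otimes P} = (\mathrm{id}_N\otimes c_{M,P})\circ(c_{M,N}\otimes\mathrm{id}_P)$ and $c_{M\otimes N,P} = (c_{M,P}\otimes\mathrm{id}_N)\circ(\mathrm{id}_M\otimes c_{N,P})$. -/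
/- Common setup: Yetter-Drinfeld-Long bimodules over a bialgebra `H`, and
Yetter-Drinfeld modules over the tensor product bialgebra `H ⊗ H^*`. -/

open TensorProduct LinearMap Module

/-! In Sweedler notation both sides of the first hexagon identity send `m ⊗ n ⊗ p` to an
expression `Ψ(x ⊗ n₍₀₎ ⊗ n₍₁₎ ⊗ p₍₀₎ ⊗ p₍₁₎)` with one fixed linear map `Ψ`
(`hexagonForwardNF`): for `c_{M,N⊗P}` one has
`x = m₍₋₁₎₁ ⊗ m₍₋₁₎₂ ⊗ m₍₀₎`, while for the composite the Long condition
`(m·h)₍₋₁₎ ⊗ (m·h)₍₀₎ = m₍₋₁₎ ⊗ m₍₀₎·h` gives `x = m₍₋₁₎ ⊗ m₍₀₎₍₋₁₎ ⊗ m₍₀₎₍₀₎`. The two agree by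
coassociativity of the left coaction. The second identity is the mirror image, using the Long
condition `(h·p)₍₀₎ ⊗ (h·p)₍₁₎ = h·p₍₀₎ ⊗ p₍₁₎` and coassociativity of the right coaction. -/

namespace YDL

open TensorProduct LinearMap Module

noncomputable section

variable {k : Type} [Field k] {H : Type} [Ring H] [Bialgebra k H]
  {M N P : Type} [AddCommGroup M] [Module k M] [AddCommGroup N] [Module k N]
  [AddCommGroup P] [Module k P]

theorem Cond2.cR_aL {D : LRData k H M} (hD : Cond2 D) (h : H) (m : M) :
    D.cR (D.aL (h ⊗ₜ m)) =
      map D.aL LinearMap.id ((TensorProduct.assoc k H M H).symm (h ⊗ₜ D.cR m)) := by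
  simpa [Cond2] using LinearMap.congr_fun hD (h ⊗ₜ m)

theorem Cond4.cL_aR {D : LRData k H M} (hD : Cond4 D) (m : M) (h : H) :
    D.cL (D.aR (m ⊗ₜ h)) =
      map LinearMap.id D.aR (TensorProduct.assoc k H M H (D.cL m ⊗ₜ h)) := by
  simpa [Cond4] using LinearMap.congr_fun hD (m ⊗ₜ h)

/-- `(a ⊗ (b ⊗ m)) ⊗ ((n ⊗ g) ⊗ (p ⊗ c)) ↦ (a·n ⊗ b·p) ⊗ m·gc` -/
def hexagonForwardNF (D : LRData k H M) (D' : LRData k H N) (D'' : LRData k H P) :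
    (H ⊗[k] (H ⊗[k] M)) ⊗[k] ((N ⊗[k] H) ⊗[k] (P ⊗[k] H)) →ₗ[k] (N ⊗[k] P) ⊗[k] M :=
  map (map D'.aL D''.aL ∘ₗ (tensorTensorTensorComm k H H N P).toLinearMap)
      (D.aR ∘ₗ map LinearMap.id (LinearMap.mul' k H)) ∘ₗ
    (tensorTensorTensorComm k (H ⊗[k] H) M (N ⊗[k] P) (H ⊗[k] H)).toLinearMap ∘ₗ
    map (TensorProduct.assoc k H H M).symm.toLinearMap
      (tensorTensorTensorComm k N H P H).toLinearMap

/-- `((a ⊗ m) ⊗ (b ⊗ n)) ⊗ (p ⊗ (g ⊗ c)) ↦ ab·p ⊗ (m·g ⊗ n·c)` -/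
def hexagonReverseNF (D : LRData k H M) (D' : LRData k H N) (D'' : LRData k H P) :
    ((H ⊗[k] M) ⊗[k] (H ⊗[k] N)) ⊗[k] (P ⊗[k] (H ⊗[k] H)) →ₗ[k] P ⊗[k] (M ⊗[k] N) :=
  map (D''.aL ∘ₗ map (LinearMap.mul' k H) LinearMap.id)
      (map D.aR D'.aR ∘ₗ (tensorTensorTensorComm k M N H H).toLinearMap) ∘ₗ
    (tensorTensorTensorComm k (H ⊗[k] H) (M ⊗[k] N) P (H ⊗[k] H)).toLinearMap ∘ₗ
    map (tensorTensorTensorComm k H M H N).toLinearMap LinearMap.id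

theorem cLR_tensorLR_right_eq (D : LRData k H M) (D' : LRData k H N) (D'' : LRData k H P) :
    cLR D (tensorLR D' D'') =
      hexagonForwardNF D D' D'' ∘ₗ
        map ((TensorProduct.assoc k H H M).toLinearMap ∘ₗ map Coalgebra.comul LinearMap.id ∘ₗ D.cL)
          (map D'.cR D''.cR) := by
  ext m n p
  obtain ⟨S, hS⟩ := exists_finset (D.cL m)
  obtain ⟨S', hS'⟩ := exists_finset (D'.cR n)
  obtain ⟨S'', hS''⟩ := exists_finset (D''.cR p)
  simp [cLR, tensorLR, hexagonForwardNF, hS, hS', hS'', sum_tmul, tmul_sum]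

theorem hexagon_forward_rhs_eq (D : LRData k H M) (D' : LRData k H N) (D'' : LRData k H P)
    (hD4 : Cond4 D) (hD : IsRMod D) :
    (TensorProduct.assoc k N P M).symm.toLinearMap ∘ₗ
        map LinearMap.id (cLR D D'') ∘ₗ (TensorProduct.assoc k N M P).toLinearMap ∘ₗ
        map (cLR D D') LinearMap.id ∘ₗ (TensorProduct.assoc k M N P).symm.toLinearMap =
      hexagonForwardNF D D' D'' ∘ₗ map (map LinearMap.id D.cL ∘ₗ D.cL) (map D'.cR D''.cR) := by
  ext m n p
  choose S hS using fun x => exists_finset (D.cL x)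
  obtain ⟨S', hS'⟩ := exists_finset (D'.cR n)
  obtain ⟨S'', hS''⟩ := exists_finset (D''.cR p)
  simp only [cLR, hexagonForwardNF, AlgebraTensorModule.curry_apply, restrictScalars_self,
    curry_apply, coe_comp, LinearEquiv.coe_coe, Function.comp_apply, assoc_symm_tmul, assoc_tmul,
    map_tmul, tensorTensorTensorComm_tmul, id_coe, id_eq, mul'_apply, hD4.cL_aR, ← hD.act_mul,
    hS, hS', hS'', tmul_sum, sum_tmul, map_sum]
  rw [Finset.sum_comm (s := S'')]
  exact Finset.sum_congr rfl fun _ _ => Finset.sum_comm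

theorem cLR_tensorLR_left_eq (D : LRData k H M) (D' : LRData k H N) (D'' : LRData k H P) :
    cLR (tensorLR D D') D'' =
      hexagonReverseNF D D' D'' ∘ₗ
        map (map D.cL D'.cL) (map LinearMap.id Coalgebra.comul ∘ₗ D''.cR) := by
  ext m n p
  obtain ⟨S, hS⟩ := exists_finset (D.cL m)
  obtain ⟨S', hS'⟩ := exists_finset (D'.cL n)
  obtain ⟨S'', hS''⟩ := exists_finset (D''.cR p)
  simp [cLR, tensorLR, hexagonReverseNF, hS, hS', hS'', sum_tmul, tmul_sum]

theorem hexagon_reverse_rhs_eq (D : LRData k H M) (D' : LRData k H N) (D'' : LRData k H P)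
    (hD2 : Cond2 D'') (hD'' : IsLMod D'') :
    (TensorProduct.assoc k P M N).toLinearMap ∘ₗ
        map (cLR D D'') LinearMap.id ∘ₗ (TensorProduct.assoc k M P N).symm.toLinearMap ∘ₗ
        map LinearMap.id (cLR D' D'') ∘ₗ (TensorProduct.assoc k M N P).toLinearMap =
      hexagonReverseNF D D' D'' ∘ₗ
        map (map D.cL D'.cL)
          ((TensorProduct.assoc k P H H).toLinearMap ∘ₗ map D''.cR LinearMap.id ∘ₗ D''.cR) := by
  ext m n p
  obtain ⟨S, hS⟩ := exists_finset (D.cL m)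
  obtain ⟨S', hS'⟩ := exists_finset (D'.cL n)
  choose S'' hS'' using fun x => exists_finset (D''.cR x)
  simp only [cLR, hexagonReverseNF, AlgebraTensorModule.curry_apply, restrictScalars_self,
    curry_apply, coe_comp, LinearEquiv.coe_coe, Function.comp_apply, assoc_symm_tmul, assoc_tmul,
    map_tmul, tensorTensorTensorComm_tmul, id_coe, id_eq, mul'_apply, hD2.cR_aL, ← hD''.mul_act,
    hS, hS', hS'', tmul_sum, sum_tmul, map_sum]
  exact Finset.sum_congr rfl fun _ _ => Finset.sum_comm

end

theorem statement19_general {k : Type} [Field k] {H : Type} [Ring H] [HopfAlgebra k H]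
    {M N P : Type} [AddCommGroup M] [Module k M] [AddCommGroup N] [Module k N]
    [AddCommGroup P] [Module k P]
    (D : LRData k H M) (D' : LRData k H N) (D'' : LRData k H P)
    (hD : IsLR D) (hD'' : IsLR D'') :
    cLR D (tensorLR D' D'')
      = (TensorProduct.assoc k N P M).symm.toLinearMap ∘ₗ
        map LinearMap.id (cLR D D'') ∘ₗ (TensorProduct.assoc k N M P).toLinearMap ∘ₗ
        map (cLR D D') LinearMap.id ∘ₗ (TensorProduct.assoc k M N P).symm.toLinearMap ∧
    cLR (tensorLR D D') D''
      = (TensorProduct.assoc k P M N).toLinearMap ∘ₗ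
        map (cLR D D'') LinearMap.id ∘ₗ (TensorProduct.assoc k M P N).symm.toLinearMap ∘ₗ
        map LinearMap.id (cLR D' D'') ∘ₗ (TensorProduct.assoc k M N P).toLinearMap := by
  constructor
  · rw [cLR_tensorLR_right_eq, hexagon_forward_rhs_eq D D' D'' hD.cond4 hD.rmod, hD.lcom.coassoc]
  · rw [cLR_tensorLR_left_eq, hexagon_reverse_rhs_eq D D' D'' hD''.cond2 hD''.lmod,
      ← hD''.rcom.coassoc]

/-- the braiding of `𝓛𝓡(H)` satisfies the hexagon identities. -/
theorem statement19 {k : Type} [Field k] {H : Type} [Ring H] [HopfAlgebra k H]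
    {M N P : Type} [AddCommGroup M] [Module k M] [AddCommGroup N] [Module k N]
    [AddCommGroup P] [Module k P]
    (hbij : Function.Bijective (HopfAlgebra.antipode (R := k) (A := H)))
    (D : LRData k H M) (D' : LRData k H N) (D'' : LRData k H P)
    (hD : IsLR D) (hD' : IsLR D') (hD'' : IsLR D'') :
    cLR D (tensorLR D' D'')
      = (TensorProduct.assoc k N P M).symm.toLinearMap ∘ₗ
        map LinearMap.id (cLR D D'') ∘ₗ (TensorProduct.assoc k N M P).toLinearMap ∘ₗ
        map (cLR D D') LinearMap.id ∘ₗ (TensorProduct.assoc k M N P).symm.toLinearMap ∧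
    cLR (tensorLR D D') D''
      = (TensorProduct.assoc k P M N).toLinearMap ∘ₗ
        map (cLR D D'') LinearMap.id ∘ₗ (TensorProduct.assoc k M P N).symm.toLinearMap ∘ₗ
        map LinearMap.id (cLR D' D'') ∘ₗ (TensorProduct.assoc k M N P).toLinearMap :=
  statement19_general D D' D'' hD hD''

end YDL
end
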